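/- Let v ∈ ℝ^C be vote counts with unique maximizer o*, and let g = min_{o≠o*}(v_{o*} − v_o) > 0 be the margin. Then the failure probability of Laplace noisy argmax with scale 1/γ satisfies Pr[M(v) ≠ o*] ≤ (C−1)·(2 + γg)/(4·exp(γg)); in particular it tends to 0 exponentially as the margin g → ∞. -/

import Mathlib

open MeasureTheory ProbabilityTheory Filter

/-- The density of the Laplace distribution `Lap(1/γ)`: `(γ/2) exp(-γ|x|)`. -/
noncomputable def laplacePDF (γ x : ℝ) : ℝ := (γ / 2) * Real.exp (-γ * |x|)

/-! If the noisy argmax misses `o*`, its winner `o` has `N o* + g ≤ N o`, so a union bound over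
`o ≠ o*` leaves `C - 1` copies of `P(Y + g ≤ X)` for independent `X, Y ∼ Lap(1/γ)`. That
probability is `∫ f(x) F(x - g) dx` with `f`, `F` the Laplace density and distribution function;
on each of `(-∞, 0]`, `(0, g]`, `(g, ∞)` the integrand is a combination of exponentials, and the
three pieces add up to `(2 + γ g) / (4 exp (γ g))` exactly. -/

open Real Set

noncomputable section

def laplaceMeasure (γ : ℝ) : Measure ℝ :=
  volume.withDensity fun x => ENNReal.ofReal (laplacePDF γ x)

def laplaceCDF (γ t : ℝ) : ℝ :=
  if t ≤ 0 then exp (γ * t) / 2 else 1 - exp (-γ * t) / 2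

instance (γ : ℝ) : SFinite (laplaceMeasure γ) := by
  unfold laplaceMeasure; infer_instance

end

section Laplace

variable {γ : ℝ}

lemma laplacePDF_nonneg (hγ : 0 < γ) (x : ℝ) : 0 ≤ laplacePDF γ x := by
  unfold laplacePDF; positivity

lemma measurable_laplacePDF : Measurable (laplacePDF γ) := by
  unfold laplacePDF; fun_prop

lemma laplacePDF_of_nonpos {x : ℝ} (hx : x ≤ 0) : laplacePDF γ x = γ / 2 * exp (γ * x) := by
  rw [laplacePDF, abs_of_nonpos hx, neg_mul_neg]

lemma laplacePDF_of_nonneg {x : ℝ} (hx : 0 ≤ x) : laplacePDF γ x = γ / 2 * exp (-γ * x) := by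
  rw [laplacePDF, abs_of_nonneg hx]

lemma integrableOn_laplacePDF_Iic (hγ : 0 < γ) {t : ℝ} (ht : t ≤ 0) :
    IntegrableOn (laplacePDF γ) (Iic t) :=
  IntegrableOn.congr_fun ((integrableOn_exp_mul_Iic hγ t).const_mul (γ / 2))
    (fun _ hx => (laplacePDF_of_nonpos (le_trans hx ht)).symm) measurableSet_Iic

lemma integrableOn_laplacePDF_Ioi (hγ : 0 < γ) {t : ℝ} (ht : 0 ≤ t) :
    IntegrableOn (laplacePDF γ) (Ioi t) :=
  IntegrableOn.congr_fun ((integrableOn_exp_mul_Ioi (neg_neg_of_pos hγ) t).const_mul (γ / 2))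
    (fun _ hx => (laplacePDF_of_nonneg (ht.trans (le_of_lt hx))).symm) measurableSet_Ioi

lemma integrable_laplacePDF (hγ : 0 < γ) : Integrable (laplacePDF γ) := by
  rw [← integrableOn_univ, ← Iic_union_Ioi (a := (0 : ℝ))]
  exact (integrableOn_laplacePDF_Iic hγ le_rfl).union (integrableOn_laplacePDF_Ioi hγ le_rfl)

lemma integral_Iic_laplacePDF_of_nonpos (hγ : 0 < γ) {t : ℝ} (ht : t ≤ 0) :
    ∫ x in Iic t, laplacePDF γ x = exp (γ * t) / 2 := by
  rw [setIntegral_congr_fun measurableSet_Iic fun x hx => laplacePDF_of_nonpos (le_trans hx ht),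
    integral_const_mul, integral_exp_mul_Iic hγ]
  field_simp

lemma integral_Ioi_laplacePDF_of_nonneg (hγ : 0 < γ) {t : ℝ} (ht : 0 ≤ t) :
    ∫ x in Ioi t, laplacePDF γ x = exp (-γ * t) / 2 := by
  rw [setIntegral_congr_fun measurableSet_Ioi
      fun x hx => laplacePDF_of_nonneg (ht.trans (le_of_lt hx)),
    integral_const_mul, integral_exp_mul_Ioi (neg_neg_of_pos hγ)]
  field_simp

lemma integral_laplacePDF (hγ : 0 < γ) : ∫ x, laplacePDF γ x = 1 := by
  rw [← intervalIntegral.integral_Iic_add_Ioi (integrableOn_laplacePDF_Iic hγ le_rfl)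
    (integrableOn_laplacePDF_Ioi hγ le_rfl), integral_Iic_laplacePDF_of_nonpos hγ le_rfl,
    integral_Ioi_laplacePDF_of_nonneg hγ le_rfl]
  norm_num

lemma integral_Iic_laplacePDF (hγ : 0 < γ) (t : ℝ) :
    ∫ x in Iic t, laplacePDF γ x = laplaceCDF γ t := by
  rw [laplaceCDF]
  split_ifs with ht
  · exact integral_Iic_laplacePDF_of_nonpos hγ ht
  · have hInt := integrable_laplacePDF hγ
    rw [← integral_Ioi_laplacePDF_of_nonneg hγ (le_of_not_ge ht), ← integral_laplacePDF hγ,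
      ← intervalIntegral.integral_Iic_add_Ioi hInt.integrableOn hInt.integrableOn (b := t)]
    ring

lemma laplaceMeasure_Iic (hγ : 0 < γ) (t : ℝ) :
    laplaceMeasure γ (Iic t) = ENNReal.ofReal (laplaceCDF γ t) := by
  rw [laplaceMeasure, withDensity_apply _ measurableSet_Iic, ← integral_Iic_laplacePDF hγ,
    ofReal_integral_eq_lintegral_ofReal (integrable_laplacePDF hγ).integrableOn
      (.of_forall (laplacePDF_nonneg hγ))]

lemma laplaceCDF_nonneg (hγ : 0 < γ) (t : ℝ) : 0 ≤ laplaceCDF γ t := by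
  rw [← integral_Iic_laplacePDF hγ]
  exact setIntegral_nonneg measurableSet_Iic fun x _ => laplacePDF_nonneg hγ x

lemma laplaceCDF_le_one (hγ : 0 < γ) (t : ℝ) : laplaceCDF γ t ≤ 1 := by
  rw [← integral_Iic_laplacePDF hγ, ← integral_laplacePDF hγ]
  exact setIntegral_le_integral (integrable_laplacePDF hγ) (.of_forall (laplacePDF_nonneg hγ))

lemma measurable_laplaceCDF : Measurable (laplaceCDF γ) :=
  Measurable.ite measurableSet_Iic (by fun_prop) (by fun_prop)

lemma laplaceCDF_of_nonpos {t : ℝ} (ht : t ≤ 0) : laplaceCDF γ t = exp (γ * t) / 2 :=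
  if_pos ht

lemma laplaceCDF_of_pos {t : ℝ} (ht : 0 < t) : laplaceCDF γ t = 1 - exp (-γ * t) / 2 :=
  if_neg ht.not_ge

lemma integrable_laplacePDF_mul_laplaceCDF_sub (hγ : 0 < γ) (g : ℝ) :
    Integrable fun x => laplacePDF γ x * laplaceCDF γ (x - g) :=
  (integrable_laplacePDF hγ).mul_bdd
    (measurable_laplaceCDF.comp (measurable_sub_const g)).aestronglyMeasurable
    (.of_forall fun x => by
      rw [Real.norm_of_nonneg (laplaceCDF_nonneg hγ _)]; exact laplaceCDF_le_one hγ _)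

lemma setIntegral_Iic_zero_laplacePDF_mul_laplaceCDF_sub (hγ : 0 < γ) {g : ℝ} (hg : 0 ≤ g) :
    ∫ x in Iic 0, laplacePDF γ x * laplaceCDF γ (x - g) = exp (-γ * g) / 8 := by
  have heq : EqOn (fun x => laplacePDF γ x * laplaceCDF γ (x - g))
      (fun x => γ / 4 * exp (-γ * g) * exp (2 * γ * x)) (Iic 0) := by
    intro x (hx : x ≤ 0)
    have hexp : exp (γ * x) * exp (γ * (x - g)) = exp (-γ * g) * exp (2 * γ * x) := by
      rw [← exp_add, ← exp_add]; ring_nf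
    simp only [laplacePDF_of_nonpos hx, laplaceCDF_of_nonpos (by linarith : x - g ≤ 0)]
    linear_combination γ / 4 * hexp
  rw [setIntegral_congr_fun measurableSet_Iic heq, integral_const_mul,
    integral_exp_mul_Iic (by positivity)]
  field_simp
  norm_num

lemma setIntegral_Ioc_zero_laplacePDF_mul_laplaceCDF_sub {g : ℝ} (hg : 0 ≤ g) :
    ∫ x in Ioc 0 g, laplacePDF γ x * laplaceCDF γ (x - g) = γ * g / 4 * exp (-γ * g) := by
  have heq : EqOn (fun x => laplacePDF γ x * laplaceCDF γ (x - g))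
      (fun _ => γ / 4 * exp (-γ * g)) (Ioc 0 g) := by
    intro x ⟨hx0, hxg⟩
    have hexp : exp (-γ * x) * exp (γ * (x - g)) = exp (-γ * g) := by
      rw [← exp_add]; ring_nf
    simp only [laplacePDF_of_nonneg hx0.le, laplaceCDF_of_nonpos (by linarith : x - g ≤ 0)]
    linear_combination γ / 4 * hexp
  rw [setIntegral_congr_fun measurableSet_Ioc heq, setIntegral_const, measureReal_def,
    Real.volume_Ioc, ENNReal.toReal_ofReal (by linarith), smul_eq_mul]
  ring

lemma setIntegral_Ioi_laplacePDF_mul_laplaceCDF_sub (hγ : 0 < γ) {g : ℝ} (hg : 0 ≤ g) :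
    ∫ x in Ioi g, laplacePDF γ x * laplaceCDF γ (x - g) = 3 * exp (-γ * g) / 8 := by
  have heq : EqOn (fun x => laplacePDF γ x * laplaceCDF γ (x - g))
      (fun x => γ / 2 * exp (-γ * x) - γ / 4 * exp (γ * g) * exp (-(2 * γ) * x)) (Ioi g) := by
    intro x (hx : g < x)
    have hexp : exp (-γ * x) * exp (-γ * (x - g)) = exp (γ * g) * exp (-(2 * γ) * x) := by
      rw [← exp_add, ← exp_add]; ring_nf
    simp only [laplacePDF_of_nonneg (by linarith : 0 ≤ x),
      laplaceCDF_of_pos (by linarith : 0 < x - g)]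
    linear_combination -(γ / 4) * hexp
  have hγ2 : -(2 * γ) < 0 := by linarith
  have hexp : exp (γ * g) * exp (-(2 * γ) * g) = exp (-γ * g) := by
    rw [← exp_add]; ring_nf
  rw [setIntegral_congr_fun measurableSet_Ioi heq,
    integral_sub ((integrableOn_exp_mul_Ioi (neg_neg_of_pos hγ) g).const_mul _)
      ((integrableOn_exp_mul_Ioi hγ2 g).const_mul _),
    integral_const_mul, integral_const_mul, integral_exp_mul_Ioi (neg_neg_of_pos hγ),
    integral_exp_mul_Ioi hγ2,
    show γ / 4 * exp (γ * g) * (-exp (-(2 * γ) * g) / -(2 * γ))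
      = γ / 4 * (exp (γ * g) * exp (-(2 * γ) * g)) / (2 * γ) by ring, hexp]
  field_simp
  ring

lemma integral_laplacePDF_mul_laplaceCDF_sub (hγ : 0 < γ) {g : ℝ} (hg : 0 ≤ g) :
    ∫ x, laplacePDF γ x * laplaceCDF γ (x - g) = (2 + γ * g) / (4 * exp (γ * g)) := by
  have hint := integrable_laplacePDF_mul_laplaceCDF_sub hγ g
  rw [← intervalIntegral.integral_Iic_add_Ioi hint.integrableOn hint.integrableOn (b := g),
    ← Iic_union_Ioc_eq_Iic hg, setIntegral_union (Iic_disjoint_Ioc le_rfl) measurableSet_Ioc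
      hint.integrableOn hint.integrableOn,
    setIntegral_Iic_zero_laplacePDF_mul_laplaceCDF_sub hγ hg,
    setIntegral_Ioc_zero_laplacePDF_mul_laplaceCDF_sub hg,
    setIntegral_Ioi_laplacePDF_mul_laplaceCDF_sub hγ hg, neg_mul, exp_neg]
  field_simp
  ring

lemma laplaceMeasure_prod_setOf_add_le {g : ℝ} (hγ : 0 < γ) (hg : 0 ≤ g) :
    (laplaceMeasure γ).prod (laplaceMeasure γ) {p : ℝ × ℝ | p.2 + g ≤ p.1}
      = ENNReal.ofReal ((2 + γ * g) / (4 * exp (γ * g))) := by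
  have hslice (x : ℝ) : Prod.mk x ⁻¹' {p : ℝ × ℝ | p.2 + g ≤ p.1} = Iic (x - g) := by
    ext y; simp [le_sub_iff_add_le]
  rw [Measure.prod_apply (measurableSet_le (by fun_prop) (by fun_prop))]
  simp_rw [hslice, laplaceMeasure_Iic hγ]
  have hCDF : Measurable fun x => ENNReal.ofReal (laplaceCDF γ (x - g)) :=
    (measurable_laplaceCDF.comp (measurable_sub_const g)).ennreal_ofReal
  rw [laplaceMeasure, lintegral_withDensity_eq_lintegral_mul _
      measurable_laplacePDF.ennreal_ofReal hCDF,
    ← integral_laplacePDF_mul_laplaceCDF_sub hγ hg]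
  simp_rw [Pi.mul_apply, ← ENNReal.ofReal_mul (laplacePDF_nonneg hγ _)]
  exact (ofReal_integral_eq_lintegral_ofReal (integrable_laplacePDF_mul_laplaceCDF_sub hγ g)
    (.of_forall fun x => mul_nonneg (laplacePDF_nonneg hγ x) (laplaceCDF_nonneg hγ _))).symm

end Laplace

lemma ProbabilityTheory.IndepFun.measure_preimage_eq_map_prod_map {Ω β β' : Type*}
    [MeasurableSpace Ω] [MeasurableSpace β] [MeasurableSpace β'] {μ : Measure Ω}
    [IsFiniteMeasure μ]
    {X : Ω → β} {Y : Ω → β'} (hXY : IndepFun X Y μ) (hX : Measurable X) (hY : Measurable Y)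
    {s : Set (β × β')} (hs : MeasurableSet s) :
    μ ((fun ω => (X ω, Y ω)) ⁻¹' s) = (μ.map X).prod (μ.map Y) s := by
  rw [← Measure.map_apply (hX.prodMk hY) hs,
    (indepFun_iff_map_prod_eq_prod_map_map hX.aemeasurable hY.aemeasurable).1 hXY]

lemma measure_add_le_of_indepFun_laplace {Ω : Type*} [MeasurableSpace Ω] {μ : Measure Ω}
    [IsFiniteMeasure μ] {X Y : Ω → ℝ} {γ g : ℝ} (hγ : 0 < γ) (hg : 0 ≤ g)
    (hXY : IndepFun X Y μ) (hX : Measurable X) (hY : Measurable Y)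
    (hXlaw : μ.map X = laplaceMeasure γ) (hYlaw : μ.map Y = laplaceMeasure γ) :
    μ {ω | Y ω + g ≤ X ω} = ENNReal.ofReal ((2 + γ * g) / (4 * exp (γ * g))) := by
  have hs : MeasurableSet {p : ℝ × ℝ | p.2 + g ≤ p.1} :=
    measurableSet_le (by fun_prop) (by fun_prop)
  have h := hXY.measure_preimage_eq_map_prod_map hX hY hs
  rwa [hXlaw, hYlaw, laplaceMeasure_prod_setOf_add_le hγ hg] at h

lemma measure_argmax_ne_le_sum {O A : Type*} [Fintype O] [DecidableEq O]
    [MeasurableSpace A] (μ : Measure A) {v : O → ℝ} {N : O → A → ℝ} {M : A → O}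
    {oStar : O} {g : ℝ} (hgle : ∀ o, o ≠ oStar → g ≤ v oStar - v o)
    (hargmax : ∀ a o, v o + N o a ≤ v (M a) + N (M a) a) :
    μ {a | M a ≠ oStar}
      ≤ ∑ o ∈ Finset.univ.erase oStar, μ {a | N oStar a + g ≤ N o a} := by
  refine (measure_mono fun a (ha : M a ≠ oStar) => ?_).trans (measure_biUnion_finset_le _ _)
  refine mem_iUnion₂.2 ⟨M a, Finset.mem_erase.2 ⟨ha, Finset.mem_univ _⟩, ?_⟩
  show N oStar a + g ≤ N (M a) a
  linarith [hargmax a oStar, hgle (M a) ha]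

lemma tendsto_mul_two_add_mul_div_four_mul_exp_atTop (c : ℝ) {γ : ℝ} (hγ : 0 < γ) :
    Tendsto (fun g : ℝ => c * (2 + γ * g) / (4 * exp (γ * g))) atTop (nhds 0) := by
  have hu : Tendsto (fun u : ℝ => c / 4 * (2 * (u ^ 0 * exp (-u)) + u ^ 1 * exp (-u)))
      atTop (nhds 0) := by
    simpa using ((tendsto_pow_mul_exp_neg_atTop_nhds_zero 0).const_mul 2).add
      (tendsto_pow_mul_exp_neg_atTop_nhds_zero 1) |>.const_mul (c / 4)
  refine (hu.comp (tendsto_id.const_mul_atTop hγ)).congr fun g => ?_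
  simp only [Function.comp_apply, id, pow_zero, pow_one, one_mul, exp_neg]
  field_simp

theorem stmt_15_general {O : Type*} [Fintype O]
    {A : Type*} [MeasurableSpace A] (μ : Measure A) [IsProbabilityMeasure μ]
    (γ : ℝ) (hγ : 0 < γ)
    (v : O → ℝ) (oStar : O)
    (g : ℝ) (hg : 0 < g) (hgle : ∀ o, o ≠ oStar → g ≤ v oStar - v o)
    (N : O → A → ℝ) (hN : ∀ o, Measurable (N o))
    (hlaw : ∀ o, μ.map (N o)
      = volume.withDensity (fun x => ENNReal.ofReal (laplacePDF γ x)))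
    (hindep : iIndepFun N μ)
    (M : A → O)
    (hargmax : ∀ a o, v o + N o a ≤ v (M a) + N (M a) a) :
    μ {a | M a ≠ oStar}
      ≤ ENNReal.ofReal ((Fintype.card O - 1)
          * (2 + γ * g) / (4 * Real.exp (γ * g))) ∧
    Tendsto (fun g : ℝ => (Fintype.card O - 1)
        * (2 + γ * g) / (4 * Real.exp (γ * g))) atTop (nhds 0) := by
  classical
  refine ⟨?_, tendsto_mul_two_add_mul_div_four_mul_exp_atTop _ hγ⟩
  have hgap : ∀ o ∈ Finset.univ.erase oStar, μ {a | N oStar a + g ≤ N o a}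
      = ENNReal.ofReal ((2 + γ * g) / (4 * exp (γ * g))) := fun o ho =>
    measure_add_le_of_indepFun_laplace hγ hg.le (hindep.indepFun (Finset.ne_of_mem_erase ho))
      (hN o) (hN oStar) (hlaw o) (hlaw oStar)
  have hcard : ((Finset.univ.erase oStar).card : ℝ) = Fintype.card O - 1 := by
    rw [Finset.card_erase_of_mem (Finset.mem_univ _), Finset.card_univ,
      Nat.cast_pred (Fintype.card_pos_iff.2 ⟨oStar⟩)]
  calc μ {a | M a ≠ oStar}
      ≤ ∑ o ∈ Finset.univ.erase oStar, μ {a | N oStar a + g ≤ N o a} :=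
        measure_argmax_ne_le_sum μ hgle hargmax
    _ = ENNReal.ofReal ((Fintype.card O - 1) * ((2 + γ * g) / (4 * exp (γ * g)))) := by
        rw [Finset.sum_congr rfl hgap, Finset.sum_const, nsmul_eq_mul, ← hcard,
          ENNReal.ofReal_mul (Nat.cast_nonneg _), ENNReal.ofReal_natCast]
    _ = _ := by rw [mul_div_assoc]

/-- Let `v ∈ ℝ^C` be vote counts with unique maximizer `o*` and margin
`g = min_{o ≠ o*} (v o* - v o) > 0`. Then the failure probability of Laplace
noisy argmax with scale `1/γ` satisfies
`Pr[M(v) ≠ o*] ≤ (C-1) (2 + γ g)/(4 exp(γ g))`; and this bound tends to `0`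
(exponentially) as the margin `g → ∞`. -/
theorem stmt_15 {O : Type*} [Fintype O] [DecidableEq O] [MeasurableSpace O]
    [MeasurableSingletonClass O]
    {A : Type*} [MeasurableSpace A] (μ : Measure A) [IsProbabilityMeasure μ]
    (γ : ℝ) (hγ : 0 < γ)
    (v : O → ℝ) (oStar : O) (hmax : ∀ o, o ≠ oStar → v o < v oStar)
    (g : ℝ) (hg : 0 < g) (hgle : ∀ o, o ≠ oStar → g ≤ v oStar - v o)
    (N : O → A → ℝ) (hN : ∀ o, Measurable (N o))
    (hlaw : ∀ o, μ.map (N o)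
      = volume.withDensity (fun x => ENNReal.ofReal (laplacePDF γ x)))
    (hindep : iIndepFun N μ)
    (M : A → O) (hM : Measurable M)
    (hargmax : ∀ a o, v o + N o a ≤ v (M a) + N (M a) a) :
    μ {a | M a ≠ oStar}
      ≤ ENNReal.ofReal ((Fintype.card O - 1)
          * (2 + γ * g) / (4 * Real.exp (γ * g))) ∧
    Tendsto (fun g : ℝ => (Fintype.card O - 1)
        * (2 + γ * g) / (4 * Real.exp (γ * g))) atTop (nhds 0) :=
  stmt_15_general μ γ hγ v oStar g hg hgle N hN hlaw hindep M hargmax
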